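/- arXiv:0809.3626 — 3 statements merged into one kernel-verified Lean document; each statement's English description precedes it below -/
import Mathlib

section
/- Let X be a Banach space, let (v_i) be a normalized, 1-unconditional, bimonotone basic sequence with biorthogonal functionals (v_i*), and let C >= 1. Suppose (x_k) is a sequence in the unit ball of X*, (y_k) is a sequence in the unit sphere S_X, and n_1 < n_2 < ... are positive integers such that: x_k(y_k) > 3/4 for all k; |x_k(y_l)| < 4^(-max(k,l)) whenever k is not equal to l; and (v_{n_k}) C-dominates (y_k). Then (x_k) 4C-dominates (v*_{n_k}): for all finitely supported scalars (a_k), ||sum a_k v*_{n_k}|| <= 4C ||sum a_k x_k||. -/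
open Filter Topology Set

noncomputable section

/-- A bundled (real) Banach space. -/
structure BanachSp : Type 1 where
  carrier : Type
  [nacg : NormedAddCommGroup carrier]
  [nsp : NormedSpace ℝ carrier]
  [complete : CompleteSpace carrier]

attribute [instance] BanachSp.nacg BanachSp.nsp BanachSp.complete

instance : CoeSort BanachSp Type := ⟨BanachSp.carrier⟩

section Seqs

variable {V : Type*} [NormedAddCommGroup V] [NormedSpace ℝ V]
variable {W : Type*} [NormedAddCommGroup W] [NormedSpace ℝ W]
variable {X : Type*} [NormedAddCommGroup X] [NormedSpace ℝ X]

/-- `DomBy u x C` : the sequence `(u i)` `C`-dominates the sequence `(x i)`, i.e.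
`‖∑ a i • x i‖ ≤ C * ‖∑ a i • u i‖` for all finitely supported scalars. -/
def DomBy (u : ℕ → V) (x : ℕ → X) (C : ℝ) : Prop :=
  ∀ (a : ℕ → ℝ) (n : ℕ),
    ‖∑ i ∈ Finset.range n, a i • x i‖ ≤ C * ‖∑ i ∈ Finset.range n, a i • u i‖

def IsNormalized (v : ℕ → V) : Prop := ∀ i, ‖v i‖ = 1

/-- A basic sequence: nonzero vectors with uniformly bounded partial sum projections. -/
def IsBasicSeq (v : ℕ → V) : Prop :=
  (∀ i, v i ≠ 0) ∧ ∃ K : ℝ, 1 ≤ K ∧ ∀ (a : ℕ → ℝ) (m n : ℕ), m ≤ n →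
    ‖∑ i ∈ Finset.range m, a i • v i‖ ≤ K * ‖∑ i ∈ Finset.range n, a i • v i‖

/-- `1`-unconditionality : changing signs of coefficients does not change the norm. -/
def IsOneUnconditional (v : ℕ → V) : Prop :=
  ∀ (a ε : ℕ → ℝ), (∀ i, ε i = 1 ∨ ε i = -1) → ∀ n : ℕ,
    ‖∑ i ∈ Finset.range n, (ε i * a i) • v i‖ = ‖∑ i ∈ Finset.range n, a i • v i‖

/-- Bimonotonicity of a basic sequence: interval projections have norm at most one. -/
def IsBimonotoneSeq (v : ℕ → V) : Prop :=
  ∀ (a : ℕ → ℝ) (p q n : ℕ), q ≤ n →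
    ‖∑ i ∈ Finset.Ico p q, a i • v i‖ ≤ ‖∑ i ∈ Finset.range n, a i • v i‖

/-- `(v i)` is `D`-right-dominant : if `m i ≤ n i` for all `i` then `(v (m i))` is
`D`-dominated by `(v (n i))`. -/
def RightDominantC (v : ℕ → V) (D : ℝ) : Prop :=
  ∀ m n : ℕ → ℕ, StrictMono m → StrictMono n → (∀ i, m i ≤ n i) →
    DomBy (fun i => v (n i)) (fun i => v (m i)) D

def RightDominant (v : ℕ → V) : Prop := ∃ D : ℝ, 1 ≤ D ∧ RightDominantC v D

/-- `(v i)` is `D`-left-dominant : if `m i ≤ n i` for all `i` then `(v (m i))`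
`D`-dominates `(v (n i))`. -/
def LeftDominantC (v : ℕ → V) (D : ℝ) : Prop :=
  ∀ m n : ℕ → ℕ, StrictMono m → StrictMono n → (∀ i, m i ≤ n i) →
    DomBy (fun i => v (m i)) (fun i => v (n i)) D

/-- `C`-block-stability: any two normalized block bases whose blocks run along the same
successive intervals are `C`-equivalent. -/
def BlockStableC (v : ℕ → V) (C : ℝ) : Prop :=
  ∀ (x y : ℕ → V) (k : ℕ → ℕ), StrictMono k →
    (∀ i, x i ∈ Submodule.span ℝ (v '' Set.Ico (k i) (k (i+1)))) →
    (∀ i, y i ∈ Submodule.span ℝ (v '' Set.Ico (k i) (k (i+1)))) →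
    (∀ i, ‖x i‖ = 1) → (∀ i, ‖y i‖ = 1) → DomBy x y C

def BlockStable (v : ℕ → V) : Prop := ∃ C : ℝ, 1 ≤ C ∧ BlockStableC v C

/-- A basic sequence is shrinking if every functional is small on far tails of its span. -/
def ShrinkingSeq (v : ℕ → V) : Prop :=
  ∀ φ : V →L[ℝ] ℝ, ∀ δ : ℝ, 0 < δ → ∃ m : ℕ, ∀ (a : ℕ → ℝ) (n : ℕ),
    ‖∑ i ∈ Finset.Ico m n, a i • v i‖ ≤ 1 →
    |φ (∑ i ∈ Finset.Ico m n, a i • v i)| ≤ δ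

/-- A basic sequence is boundedly complete if series with bounded partial sums converge. -/
def BoundedlyCompleteSeq (v : ℕ → V) : Prop :=
  ∀ a : ℕ → ℝ, (∃ M : ℝ, ∀ n, ‖∑ i ∈ Finset.range n, a i • v i‖ ≤ M) →
    ∃ s : V, Tendsto (fun n => ∑ i ∈ Finset.range n, a i • v i) atTop (𝓝 s)

/-- `(w i)` represents (isometrically) the sequence of biorthogonal functionals of the
`1`-unconditional basic sequence `(v i)`: the norm of `∑ a i • w i` is the supremum of the
pairings `∑ a i * b i` over `b` with `‖∑ b i • v i‖ ≤ 1`. -/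
def IsBiorthDual (v : ℕ → V) (w : ℕ → W) : Prop :=
  ∀ (a : ℕ → ℝ) (n : ℕ),
    IsLUB {r : ℝ | ∃ b : ℕ → ℝ, ‖∑ i ∈ Finset.range n, b i • v i‖ ≤ 1 ∧
      r = ∑ i ∈ Finset.range n, a i * b i} ‖∑ i ∈ Finset.range n, a i • w i‖

def WeaklyNullSeq (x : ℕ → X) : Prop :=
  ∀ φ : X →L[ℝ] ℝ, Tendsto (fun i => φ (x i)) atTop (𝓝 0)

end Seqs

/-- A finite-dimensional decomposition (FDD) of `Z` : finite-dimensional subspaces `E i`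
together with the coordinate projections `P i`, such that every `z` is the sum of its
coordinates, uniquely. -/
structure FDD (Z : Type*) [NormedAddCommGroup Z] [NormedSpace ℝ Z] where
  E : ℕ → Submodule ℝ Z
  finDim : ∀ n, FiniteDimensional ℝ (E n)
  P : ℕ → Z →L[ℝ] Z
  mem_E : ∀ i z, P i z ∈ E i
  sum_eq : ∀ z : Z, Tendsto (fun n => ∑ i ∈ Finset.range n, P i z) atTop (𝓝 z)
  unique : ∀ (z : Z) (f : ℕ → Z), (∀ i, f i ∈ E i) →
    Tendsto (fun n => ∑ i ∈ Finset.range n, f i) atTop (𝓝 z) → ∀ i, f i = P i z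

namespace FDD

variable {Z : Type*} [NormedAddCommGroup Z] [NormedSpace ℝ Z]
variable {V : Type*} [NormedAddCommGroup V] [NormedSpace ℝ V]
variable {W : Type*} [NormedAddCommGroup W] [NormedSpace ℝ W]

/-- The canonical projection `P^E_s` onto the span of `(E i : i ∈ s)`. -/
def proj (F : FDD Z) (s : Finset ℕ) : Z →L[ℝ] Z := ∑ i ∈ s, F.P i

/-- The support of a vector with respect to the FDD. -/
def supp (F : FDD Z) (z : Z) : Set ℕ := {i | F.P i z ≠ 0}

/-- `min supp_E z`. -/
def minSupp (F : FDD Z) (z : Z) : ℕ := sInf (F.supp z)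

/-- A block sequence with respect to an FDD: supports lie in successive intervals. -/
def IsBlockSeq (F : FDD Z) (z : ℕ → Z) : Prop :=
  ∃ k : ℕ → ℕ, StrictMono k ∧ ∀ i, F.supp (z i) ⊆ Set.Ico (k i) (k (i+1))

/-- Bimonotonicity: all interval projections have norm at most `1`. -/
def Bimonotone (F : FDD Z) : Prop :=
  ∀ (m n : ℕ) (z : Z), ‖F.proj (Finset.Icc m n) z‖ ≤ ‖z‖

/-- `C` is the projection constant: the supremum of norms of interval projections. -/
def IsProjConst (F : FDD Z) (C : ℝ) : Prop :=
  IsLUB {r : ℝ | ∃ (m n : ℕ) (z : Z), ‖z‖ ≤ 1 ∧ r = ‖F.proj (Finset.Icc m n) z‖} C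

/-- The FDD is shrinking: every functional is the norm limit of its finite-dimensional
restrictions, i.e. the biorthogonal functionals form an FDD of the dual. -/
def Shrinking (F : FDD Z) : Prop :=
  ∀ φ : Z →L[ℝ] ℝ,
    Tendsto (fun n => ‖φ - φ.comp (F.proj (Finset.range n))‖) atTop (𝓝 0)

/-- The FDD is boundedly complete. -/
def BoundedlyComplete (F : FDD Z) : Prop :=
  ∀ f : ℕ → Z, (∀ i, f i ∈ F.E i) →
    (∃ M : ℝ, ∀ n, ‖∑ i ∈ Finset.range n, f i‖ ≤ M) →
    ∃ z : Z, Tendsto (fun n => ∑ i ∈ Finset.range n, f i) atTop (𝓝 z)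

/-- `H` is a blocking of `F`. -/
def IsBlockingOf (H F : FDD Z) : Prop :=
  ∃ m : ℕ → ℕ, m 0 = 0 ∧ StrictMono m ∧
    ∀ j, H.E j = ⨆ i ∈ Finset.Ico (m j) (m (j+1)), F.E i

/-- The closed span `Z_m` of the subspaces `E i`, `i ≥ m` (the first `m` coordinates
removed). -/
def tail (F : FDD Z) (m : ℕ) : Set Z :=
  closure (↑(⨆ i ∈ Set.Ici m, F.E i) : Set Z)

/-- Subsequential `C`-`V`-upper block estimates. -/
def UpperBlockC (F : FDD Z) (v : ℕ → V) (C : ℝ) : Prop :=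
  ∀ z : ℕ → Z, F.IsBlockSeq z → (∀ i, ‖z i‖ = 1) →
    DomBy (fun i => v (F.minSupp (z i))) z C

def UpperBlock (F : FDD Z) (v : ℕ → V) : Prop := ∃ C : ℝ, 1 ≤ C ∧ F.UpperBlockC v C

/-- Subsequential `C`-`V`-lower block estimates. -/
def LowerBlockC (F : FDD Z) (v : ℕ → V) (C : ℝ) : Prop :=
  ∀ z : ℕ → Z, F.IsBlockSeq z → (∀ i, ‖z i‖ = 1) →
    DomBy z (fun i => v (F.minSupp (z i))) C

def LowerBlock (F : FDD Z) (v : ℕ → V) : Prop := ∃ C : ℝ, 1 ≤ C ∧ F.LowerBlockC v C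

/-- A functional supported (w.r.t. the biorthogonal FDD `(E i ^*)`) on the finite set `s`. -/
def dualSupported (F : FDD Z) (s : Finset ℕ) (φ : Z →L[ℝ] ℝ) : Prop :=
  ∀ z : Z, φ z = φ (F.proj s z)

/-- A block sequence of the biorthogonal functionals `(E i ^*)`. -/
def IsDualBlockSeq (F : FDD Z) (φ : ℕ → Z →L[ℝ] ℝ) : Prop :=
  ∃ k : ℕ → ℕ, StrictMono k ∧
    ∀ i, F.dualSupported (Finset.Ico (k i) (k (i+1))) (φ i)

/-- `min supp` of a functional w.r.t. `(E i ^*)`. -/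
def dualMinSupp (F : FDD Z) (φ : Z →L[ℝ] ℝ) : ℕ :=
  sInf {j | ∃ z, φ (F.P j z) ≠ 0}

/-- The biorthogonal FDD `(E i ^*)` satisfies subsequential `C`-`V^*`-lower block
estimates in `Z^(*)`. -/
def DualLowerBlockC (F : FDD Z) (w : ℕ → W) (C : ℝ) : Prop :=
  ∀ φ : ℕ → Z →L[ℝ] ℝ, F.IsDualBlockSeq φ → (∀ i, ‖φ i‖ = 1) →
    DomBy φ (fun i => w (F.dualMinSupp (φ i))) C

def DualLowerBlock (F : FDD Z) (w : ℕ → W) : Prop := ∃ C : ℝ, 1 ≤ C ∧ F.DualLowerBlockC w C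

/-- The biorthogonal FDD `(E i ^*)` satisfies subsequential `C`-`V`-upper block
estimates. -/
def DualUpperBlockC (F : FDD Z) (w : ℕ → W) (C : ℝ) : Prop :=
  ∀ φ : ℕ → Z →L[ℝ] ℝ, F.IsDualBlockSeq φ → (∀ i, ‖φ i‖ = 1) →
    DomBy (fun i => w (F.dualMinSupp (φ i))) φ C

/-- A `δ̄`-skipped block sequence w.r.t. the FDD. -/
def IsSkippedBlock (F : FDD Z) (δ : ℕ → ℝ) (y : ℕ → Z) : Prop :=
  (∀ i, ‖y i‖ = 1) ∧ ∃ k : ℕ → ℕ, k 0 = 0 ∧ StrictMono k ∧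
    ∀ i, ‖F.proj (Finset.Ioo (k i) (k (i+1))) (y i) - y i‖ < δ i

end FDD

section Trees

variable {V : Type*} [NormedAddCommGroup V] [NormedSpace ℝ V]
variable {W : Type*} [NormedAddCommGroup W] [NormedSpace ℝ W]

/-- The finite set `{n 0, …, n (2l+1)}`, i.e. the branch node of level `l+1` along the
strictly increasing sequence `n`. -/
def branchSet (n : ℕ → ℕ) (l : ℕ) : Finset ℕ := Finset.image n (Finset.range (2*l+2))

/-- A normalized weakly null even tree in `X` (indexed by finite sets of naturals, which
correspond to finite strictly increasing sequences). -/
def WNEvenTree {X : Type*} [NormedAddCommGroup X] [NormedSpace ℝ X]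
    (x : Finset ℕ → X) : Prop :=
  (∀ s : Finset ℕ, Even s.card → ‖x s‖ = 1) ∧
  ∀ s : Finset ℕ, Odd s.card →
    ∀ φ : X →L[ℝ] ℝ, Tendsto (fun k => φ (x (insert k s))) atTop (𝓝 0)

/-- Subsequential `C`-`V`-upper tree estimates. -/
def UpperTreeC (v : ℕ → V) (X : Type*) [NormedAddCommGroup X] [NormedSpace ℝ X]
    (C : ℝ) : Prop :=
  ∀ x : Finset ℕ → X, WNEvenTree x →
    ∃ n : ℕ → ℕ, StrictMono n ∧
      DomBy (fun l => v (n (2*l))) (fun l => x (branchSet n l)) C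

/-- Subsequential `V`-upper tree estimates. -/
def UpperTree (v : ℕ → V) (X : Type*) [NormedAddCommGroup X] [NormedSpace ℝ X] : Prop :=
  ∃ C : ℝ, 1 ≤ C ∧ UpperTreeC v X C

/-- A normalized `w^*`-null even tree in the dual of `X`. -/
def WStarNullEvenTree {X : Type*} [NormedAddCommGroup X] [NormedSpace ℝ X]
    (f : Finset ℕ → (X →L[ℝ] ℝ)) : Prop :=
  (∀ s : Finset ℕ, Even s.card → ‖f s‖ = 1) ∧
  ∀ s : Finset ℕ, Odd s.card →
    ∀ u : X, Tendsto (fun k => f (insert k s) u) atTop (𝓝 0)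

/-- Subsequential `C`-`V^*`-lower `w^*` tree estimates for the dual of `X`. -/
def LowerWStarTreeC (w : ℕ → W) (X : Type*) [NormedAddCommGroup X] [NormedSpace ℝ X]
    (C : ℝ) : Prop :=
  ∀ f : Finset ℕ → (X →L[ℝ] ℝ), WStarNullEvenTree f →
    ∃ n : ℕ → ℕ, StrictMono n ∧
      DomBy (fun l => f (branchSet n l)) (fun l => w (n (2*l))) C

end Trees

section Maps

variable {X : Type*} [NormedAddCommGroup X] [NormedSpace ℝ X]
variable {Y : Type*} [NormedAddCommGroup Y] [NormedSpace ℝ Y]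

/-- `X` embeds isomorphically into `Y`. -/
def Embeds (X Y : Type*) [NormedAddCommGroup X] [NormedSpace ℝ X]
    [NormedAddCommGroup Y] [NormedSpace ℝ Y] : Prop :=
  ∃ T : X →L[ℝ] Y, ∃ c : ℝ, 0 < c ∧ ∀ x : X, c * ‖x‖ ≤ ‖T x‖

/-- `X` is a quotient of `Z` (there is a bounded linear surjection `Z → X`). -/
def IsQuotientOf (X Z : Type*) [NormedAddCommGroup X] [NormedSpace ℝ X]
    [NormedAddCommGroup Z] [NormedSpace ℝ Z] : Prop :=
  ∃ Q : Z →L[ℝ] X, Function.Surjective Q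

/-- A map between dual spaces is `w^*`-`w^*` continuous. -/
def WStarWStarContinuous {X Z : Type*} [NormedAddCommGroup X] [NormedSpace ℝ X]
    [NormedAddCommGroup Z] [NormedSpace ℝ Z]
    (T : StrongDual ℝ X →L[ℝ] StrongDual ℝ Z) : Prop :=
  Continuous (fun φ : WeakDual ℝ X =>
    StrongDual.toWeakDual (T (WeakDual.toStrongDual φ)))

end Maps

/-! Pair `f = ∑ a k • x k` with `u = ∑ q k • y k`, where `q k = ± b (n k)` carries the sign of
`a k * b (n k)` and `‖∑ b i • v i‖ ≤ 1`. By unconditionality and domination `‖u‖ ≤ C`, so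
`f u ≤ C ‖f‖`. The matrix `(x l (y k))` has diagonal `> 3/4` and off-diagonal entries
`< 4 ^ (-max k l)`: testing `f` on each `y k` gives `|a k| ≤ 12/5 ‖f‖`, and feeding this back
shows that the off-diagonal part of `f u` is at most `2 ‖f‖`, while its diagonal part is at
least `3/4 ∑ |a k b (n k)|`. Hence `∑ a k b (n k) ≤ 4/3 (C + 2) ‖f‖ ≤ 4 C ‖f‖`, and the
supremum over `b` is `‖∑ a k • w (n k)‖`. -/

open Finset

def offDiagBound (k : ℕ) : ℝ := (3 * k + 1) / (3 * 4 ^ k)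

lemma offDiagBound_nonneg (k : ℕ) : 0 ≤ offDiagBound k := by
  unfold offDiagBound; positivity

lemma offDiagBound_le_third (k : ℕ) : offDiagBound k ≤ 1 / 3 := by
  have h : 3 * (k : ℝ) + 1 ≤ 4 ^ k := by
    have := one_add_mul_le_pow (a := (3 : ℝ)) (by norm_num) k
    norm_num at this; linarith
  unfold offDiagBound
  rw [div_le_div_iff₀ (by positivity) (by norm_num)]
  linarith

lemma sum_erase_inv_four_pow_max_le (m k : ℕ) :
    ∑ l ∈ (range m).erase k, ((4 : ℝ) ^ max l k)⁻¹ ≤ offDiagBound k := by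
  have hsplit : (range m).erase k ⊆ range k ∪ Ico (k + 1) m := by
    intro l; simp only [mem_erase, Finset.mem_range, Finset.mem_union, Finset.mem_Ico]; omega
  have hdisj : Disjoint (range k) (Ico (k + 1) m) := by
    rw [Finset.disjoint_left]; intro l; simp only [Finset.mem_range, Finset.mem_Ico]; omega
  have hlow : ∑ l ∈ range k, ((4 : ℝ) ^ max l k)⁻¹ = k * ((4 : ℝ) ^ k)⁻¹ := by
    rw [sum_congr rfl fun l hl => by rw [max_eq_right (mem_range.1 hl).le]]
    simp
  have hhigh :
      ∑ l ∈ Ico (k + 1) m, ((4 : ℝ) ^ max l k)⁻¹ ≤ (4 : ℝ)⁻¹ ^ (k + 1) / (1 - 4⁻¹) := by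
    rw [sum_congr rfl fun l hl => by
      rw [max_eq_left (Nat.le_of_succ_le (mem_Ico.1 hl).1), ← inv_pow]]
    exact geom_sum_Ico_le_of_lt_one (by norm_num) (by norm_num)
  calc ∑ l ∈ (range m).erase k, ((4 : ℝ) ^ max l k)⁻¹
      ≤ ∑ l ∈ range k ∪ Ico (k + 1) m, ((4 : ℝ) ^ max l k)⁻¹ :=
        sum_le_sum_of_subset_of_nonneg hsplit fun _ _ _ => by positivity
    _ ≤ k * ((4 : ℝ) ^ k)⁻¹ + (4 : ℝ)⁻¹ ^ (k + 1) / (1 - 4⁻¹) := by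
        rw [sum_union hdisj, hlow]; linarith
    _ = offDiagBound k := by
        unfold offDiagBound; rw [inv_pow, pow_succ]; field_simp; ring

lemma sum_range_offDiagBound (m : ℕ) :
    ∑ k ∈ range m, offDiagBound k = 8 / 9 - (12 * m + 8) / (9 * 4 ^ m) := by
  induction m with
  | zero => norm_num
  | succ m ih =>
    rw [sum_range_succ, ih]; unfold offDiagBound; push_cast; rw [pow_succ]; field_simp; ring

lemma sum_range_offDiagBound_sq (m : ℕ) :
    ∑ k ∈ range m, offDiagBound k ^ 2
      = 832 / 3375 - (3600 * m ^ 2 + 2880 * m + 832) / (3375 * (4 ^ m) ^ 2) := by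
  induction m with
  | zero => norm_num
  | succ m ih =>
    rw [sum_range_succ, ih]; unfold offDiagBound
    push_cast; rw [pow_succ]; field_simp; ring

lemma sum_range_offDiagBound_le (m : ℕ) : ∑ k ∈ range m, offDiagBound k ≤ 8 / 9 := by
  rw [sum_range_offDiagBound]
  have : (0 : ℝ) ≤ (12 * m + 8) / (9 * 4 ^ m) := by positivity
  linarith

lemma sum_range_offDiagBound_sq_le (m : ℕ) :
    ∑ k ∈ range m, offDiagBound k ^ 2 ≤ 832 / 3375 := by
  rw [sum_range_offDiagBound_sq]
  have : (0 : ℝ) ≤ (3600 * m ^ 2 + 2880 * m + 832) / (3375 * (4 ^ m) ^ 2) := by positivity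
  linarith

section AlmostDiagonal

variable {M : ℕ → ℕ → ℝ} {a : ℕ → ℝ} {m : ℕ} {F : ℝ}

lemma three_quarters_abs_le_of_almostDiag (hdiag : ∀ k, 3 / 4 ≤ M k k)
    (hoff : ∀ k l, k ≠ l → |M k l| ≤ ((4 : ℝ) ^ max k l)⁻¹)
    (hF : ∀ k < m, |∑ l ∈ range m, a l * M l k| ≤ F) {A : ℝ} (hA : ∀ l < m, |a l| ≤ A)
    {k : ℕ} (hk : k < m) : 3 / 4 * |a k| ≤ F + A * offDiagBound k := by
  have hA0 : 0 ≤ A := (abs_nonneg _).trans (hA k hk)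
  have hrest : |∑ l ∈ (range m).erase k, a l * M l k| ≤ A * offDiagBound k :=
    calc |∑ l ∈ (range m).erase k, a l * M l k|
        ≤ ∑ l ∈ (range m).erase k, A * ((4 : ℝ) ^ max l k)⁻¹ := by
          refine (abs_sum_le_sum_abs _ _).trans (sum_le_sum fun l hl => ?_)
          obtain ⟨hlk, hl⟩ := mem_erase.1 hl
          rw [abs_mul]
          exact mul_le_mul (hA l (mem_range.1 hl)) (hoff l k hlk) (abs_nonneg _) hA0
      _ ≤ A * offDiagBound k := by
          rw [← mul_sum]
          exact mul_le_mul_of_nonneg_left (sum_erase_inv_four_pow_max_le m k) hA0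
  have hdiff : a k * M k k
      = ∑ l ∈ range m, a l * M l k - ∑ l ∈ (range m).erase k, a l * M l k := by
    rw [← add_sum_erase _ _ (mem_range.2 hk)]; ring
  have hdiagk : 3 / 4 * |a k| ≤ |a k * M k k| := by
    rw [abs_mul, abs_of_nonneg (by linarith [hdiag k] : 0 ≤ M k k)]
    linarith [mul_le_mul_of_nonneg_left (hdiag k) (abs_nonneg (a k))]
  have htri := abs_sub (∑ l ∈ range m, a l * M l k) (∑ l ∈ (range m).erase k, a l * M l k)
  rw [← hdiff] at htri
  linarith [hF k hk]

lemma abs_le_of_almostDiag (hdiag : ∀ k, 3 / 4 ≤ M k k)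
    (hoff : ∀ k l, k ≠ l → |M k l| ≤ ((4 : ℝ) ^ max k l)⁻¹)
    (hF : ∀ k < m, |∑ l ∈ range m, a l * M l k| ≤ F) {k : ℕ} (hk : k < m) :
    |a k| ≤ 12 / 5 * F := by
  obtain ⟨k₀, hk₀, hmax⟩ := exists_max_image (range m) (fun l => |a l|) ⟨k, mem_range.2 hk⟩
  have hA : ∀ l < m, |a l| ≤ |a k₀| := fun l hl => hmax l (mem_range.2 hl)
  have h := three_quarters_abs_le_of_almostDiag hdiag hoff hF hA (mem_range.1 hk₀)
  have := mul_le_mul_of_nonneg_left (offDiagBound_le_third k₀) (abs_nonneg (a k₀))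
  linarith [hA k hk]

lemma sum_abs_mul_offDiagBound_le (hdiag : ∀ k, 3 / 4 ≤ M k k)
    (hoff : ∀ k l, k ≠ l → |M k l| ≤ ((4 : ℝ) ^ max k l)⁻¹)
    (hF : ∀ k < m, |∑ l ∈ range m, a l * M l k| ≤ F) (hF0 : 0 ≤ F) :
    ∑ l ∈ range m, |a l| * offDiagBound l ≤ 2 * F := by
  have hcoeff : ∀ l < m, |a l| ≤ 4 / 3 * F + 16 / 5 * F * offDiagBound l := fun l hl => by
    have := three_quarters_abs_le_of_almostDiag hdiag hoff hF
      (fun l hl => abs_le_of_almostDiag hdiag hoff hF hl) hl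
    linarith
  -- The cruder `|a l| ≤ 12/5 F` alone would only give `32/15 * F` here.
  calc ∑ l ∈ range m, |a l| * offDiagBound l
      ≤ ∑ l ∈ range m, (4 / 3 * F * offDiagBound l + 16 / 5 * F * offDiagBound l ^ 2) :=
        sum_le_sum fun l hl => by
          nlinarith [hcoeff l (mem_range.1 hl), offDiagBound_nonneg l]
    _ = 4 / 3 * F * ∑ l ∈ range m, offDiagBound l
          + 16 / 5 * F * ∑ l ∈ range m, offDiagBound l ^ 2 := by
        rw [sum_add_distrib, mul_sum, mul_sum]
    _ ≤ 2 * F := by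
        nlinarith [sum_range_offDiagBound_le m, sum_range_offDiagBound_sq_le m]

lemma abs_sum_offDiag_le (hdiag : ∀ k, 3 / 4 ≤ M k k)
    (hoff : ∀ k l, k ≠ l → |M k l| ≤ ((4 : ℝ) ^ max k l)⁻¹)
    (hF : ∀ k < m, |∑ l ∈ range m, a l * M l k| ≤ F) (hF0 : 0 ≤ F) {q : ℕ → ℝ}
    (hq : ∀ k < m, |q k| ≤ 1) :
    |∑ l ∈ range m, a l * ∑ k ∈ (range m).erase l, q k * M l k| ≤ 2 * F := by
  refine (abs_sum_le_sum_abs _ _).trans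
    (le_trans (sum_le_sum fun l _ => ?_) (sum_abs_mul_offDiagBound_le hdiag hoff hF hF0))
  rw [abs_mul]
  refine mul_le_mul_of_nonneg_left ?_ (abs_nonneg _)
  calc |∑ k ∈ (range m).erase l, q k * M l k|
      ≤ ∑ k ∈ (range m).erase l, ((4 : ℝ) ^ max k l)⁻¹ := by
        refine (abs_sum_le_sum_abs _ _).trans (sum_le_sum fun k hk => ?_)
        obtain ⟨hkl, hk⟩ := mem_erase.1 hk
        rw [abs_mul, max_comm]
        exact (mul_le_of_le_one_left (abs_nonneg _) (hq k (mem_range.1 hk))).trans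
          (hoff l k (Ne.symm hkl))
    _ ≤ offDiagBound l := sum_erase_inv_four_pow_max_le m l

lemma three_quarters_sum_le_of_almostDiag (hdiag : ∀ k, 3 / 4 ≤ M k k)
    (hoff : ∀ k l, k ≠ l → |M k l| ≤ ((4 : ℝ) ^ max k l)⁻¹)
    (hF : ∀ k < m, |∑ l ∈ range m, a l * M l k| ≤ F) (hF0 : 0 ≤ F) {q : ℕ → ℝ}
    (hq : ∀ k < m, |q k| ≤ 1) (haq : ∀ k < m, 0 ≤ a k * q k) :
    3 / 4 * ∑ k ∈ range m, a k * q k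
      ≤ ∑ l ∈ range m, a l * ∑ k ∈ range m, q k * M l k + 2 * F := by
  have hsplit : ∑ l ∈ range m, a l * ∑ k ∈ range m, q k * M l k
      = ∑ l ∈ range m, a l * q l * M l l
        + ∑ l ∈ range m, a l * ∑ k ∈ (range m).erase l, q k * M l k := by
    rw [← sum_add_distrib]
    refine sum_congr rfl fun l hl => ?_
    rw [← add_sum_erase _ _ hl]; ring
  have hdiagSum : 3 / 4 * ∑ k ∈ range m, a k * q k ≤ ∑ l ∈ range m, a l * q l * M l l := by
    rw [mul_sum]
    exact sum_le_sum fun l hl => by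
      rw [mul_comm]; exact mul_le_mul_of_nonneg_left (hdiag l) (haq l (mem_range.1 hl))
  linarith [neg_abs_le (∑ l ∈ range m, a l * ∑ k ∈ (range m).erase l, q k * M l k),
    abs_sum_offDiag_le hdiag hoff hF hF0 hq]

end AlmostDiagonal

lemma sum_range_fiberwise_smul {E : Type*} [AddCommMonoid E] [Module ℝ E] {n : ℕ → ℕ}
    {m N : ℕ} (hnN : ∀ k < m, n k < N) (a : ℕ → ℝ) (z : ℕ → E) :
    ∑ i ∈ range N, (∑ k ∈ range m with n k = i, a k) • z i = ∑ k ∈ range m, a k • z (n k) := by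
  rw [← sum_fiberwise_of_maps_to (g := n) fun k hk => mem_range.2 (hnN k (mem_range.1 hk))]
  refine sum_congr rfl fun i _ => ?_
  rw [sum_smul]
  exact sum_congr rfl fun k hk => by rw [(mem_filter.1 hk).2]

lemma exists_sign_mul_eq_abs (a c : ℕ → ℝ) :
    ∃ s : ℕ → ℝ, (∀ k, s k = 1 ∨ s k = -1) ∧ ∀ k, a k * (s k * c k) = |a k * c k| := by
  refine ⟨fun k => if 0 ≤ a k * c k then 1 else -1, fun k => by dsimp only; split_ifs <;> simp,
    fun k => ?_⟩
  dsimp only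
  split_ifs with h
  · rw [abs_of_nonneg h]; ring
  · rw [abs_of_neg (not_le.1 h)]; ring

section BasicSequences

variable {V W : Type*} [NormedAddCommGroup V] [NormedSpace ℝ V] [NormedAddCommGroup W]
  [NormedSpace ℝ W] {v : ℕ → V}

lemma IsBimonotoneSeq.abs_coeff_le (hbi : IsBimonotoneSeq v) (hnorm : IsNormalized v)
    (b : ℕ → ℝ) {i N : ℕ} (hi : i < N) : |b i| ≤ ‖∑ j ∈ range N, b j • v j‖ := by
  simpa [norm_smul, hnorm i] using hbi b i (i + 1) N hi

lemma IsOneUnconditional.norm_sum_subset_le (hu : IsOneUnconditional v) {s : Finset ℕ} {N : ℕ}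
    (hs : s ⊆ range N) (b ε : ℕ → ℝ) (hε : ∀ i, ε i = 1 ∨ ε i = -1) :
    ‖∑ i ∈ s, (ε i * b i) • v i‖ ≤ ‖∑ i ∈ range N, b i • v i‖ := by
  classical
  set δ : ℕ → ℝ := fun i => if i ∈ s then ε i else -ε i
  have hδ : ∀ i, δ i = 1 ∨ δ i = -1 := fun i => by
    simp only [δ]; split_ifs <;> rcases hε i with h | h <;> simp [h]
  -- Averaging the sign patterns `ε` and `δ` kills the coefficients outside `s`.
  have havg : (2 : ℝ) • ∑ i ∈ s, (ε i * b i) • v i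
      = ∑ i ∈ range N, (ε i * b i) • v i + ∑ i ∈ range N, (δ i * b i) • v i := by
    rw [← sum_add_distrib, smul_sum, ← Finset.inter_eq_right.2 hs, ← sum_ite_mem]
    refine sum_congr rfl fun i _ => ?_
    simp only [δ]; split_ifs <;> module
  have h2 := norm_add_le (∑ i ∈ range N, (ε i * b i) • v i) (∑ i ∈ range N, (δ i * b i) • v i)
  rw [← havg, norm_smul, hu b ε hε, hu b δ hδ] at h2
  norm_num at h2
  linarith

lemma IsOneUnconditional.norm_sum_comp_le (hu : IsOneUnconditional v) {n : ℕ → ℕ}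
    (hn : n.Injective) {m N : ℕ} (hnN : ∀ k < m, n k < N) (b s : ℕ → ℝ)
    (hs : ∀ k, s k = 1 ∨ s k = -1) :
    ‖∑ k ∈ range m, (s k * b (n k)) • v (n k)‖ ≤ ‖∑ i ∈ range N, b i • v i‖ := by
  classical
  have hinv : ∀ k, s (n.invFun (n k)) = s k := fun k => by
    rw [Function.leftInverse_invFun hn k]
  have himage : (range m).image n ⊆ range N := by
    intro i hi
    obtain ⟨k, hk, rfl⟩ := mem_image.1 hi
    exact mem_range.2 (hnN k (mem_range.1 hk))
  have := hu.norm_sum_subset_le himage b (s ∘ n.invFun) fun i => hs _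
  rw [sum_image hn.injOn] at this
  simpa only [Function.comp_apply, hinv] using this

lemma IsBiorthDual.norm_sum_comp_le_of_pairing_le {w : ℕ → W} (hw : IsBiorthDual v w)
    {n : ℕ → ℕ} {m N : ℕ} (hnN : ∀ k < m, n k < N) (a : ℕ → ℝ)
    {R : ℝ} (hR : ∀ b : ℕ → ℝ, ‖∑ i ∈ range N, b i • v i‖ ≤ 1 →
      ∑ k ∈ range m, a k * b (n k) ≤ R) :
    ‖∑ k ∈ range m, a k • w (n k)‖ ≤ R := by
  rw [← sum_range_fiberwise_smul hnN]
  refine (hw _ N).2 ?_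
  rintro r ⟨b, hb, rfl⟩
  simpa only [← smul_eq_mul, sum_range_fiberwise_smul hnN] using hR b hb

end BasicSequences

theorem almost_biorthogonal_dominates_dual_general
    {X : Type*} [NormedAddCommGroup X] [NormedSpace ℝ X]
    {V : Type*} [NormedAddCommGroup V] [NormedSpace ℝ V]
    {W : Type*} [NormedAddCommGroup W] [NormedSpace ℝ W]
    (v : ℕ → V) (w : ℕ → W)
    (hvnorm : IsNormalized v) (hvuncond : IsOneUnconditional v)
    (hvbimono : IsBimonotoneSeq v)
    (hw : IsBiorthDual v w)
    (C : ℝ) (hC : 1 ≤ C)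
    (x : ℕ → StrongDual ℝ X)
    (y : ℕ → X) (hy : ∀ k, ‖y k‖ = 1)
    (n : ℕ → ℕ) (hn : StrictMono n)
    (hbig : ∀ k, x k (y k) > 3/4)
    (hsmall : ∀ k l, k ≠ l → |x k (y l)| < ((4:ℝ) ^ (max k l))⁻¹)
    (hdom : DomBy (fun k => v (n k)) y C) :
    DomBy x (fun k => w (n k)) (4*C) := by
  intro a m
  set f := ∑ k ∈ range m, a k • x k
  have hf : ∀ z, f z = ∑ l ∈ range m, a l * x l z := fun z => by simp [f]
  have hfy : ∀ k < m, |∑ l ∈ range m, a l * x l (y k)| ≤ ‖f‖ := fun k _ => by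
    simpa [hf, hy k] using f.le_opNorm (y k)
  refine hw.norm_sum_comp_le_of_pairing_le (fun k hk => hn hk) a fun b hb => ?_
  obtain ⟨s, hs, haq⟩ := exists_sign_mul_eq_abs a fun k => b (n k)
  set q : ℕ → ℝ := fun k => s k * b (n k)
  set u := ∑ k ∈ range m, q k • y k
  have hq : ∀ k < m, |q k| ≤ 1 := fun k hk => by
    rcases hs k with h | h <;>
      simpa [q, h] using (hvbimono.abs_coeff_le hvnorm b (hn hk)).trans hb
  have hu : ‖u‖ ≤ C :=
    (hdom q m).trans <| mul_le_of_le_one_right (by linarith) <|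
      (hvuncond.norm_sum_comp_le hn.injective (fun k hk => hn hk) b s hs).trans hb
  have hfu : f u ≤ C * ‖f‖ :=
    (le_abs_self _).trans <| (f.le_opNorm u).trans <| by rw [mul_comm]; gcongr
  have hfu_eq : f u = ∑ l ∈ range m, a l * ∑ k ∈ range m, q k * x l (y k) := by
    simp [u, hf, map_sum]
  have hdiag := three_quarters_sum_le_of_almostDiag (fun k => (hbig k).le)
    (fun k l hkl => (hsmall k l hkl).le) hfy (norm_nonneg f) hq
    fun k _ => (haq k).symm ▸ abs_nonneg _
  calc ∑ k ∈ range m, a k * b (n k)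
      ≤ ∑ k ∈ range m, a k * q k := sum_le_sum fun k _ => (haq k).symm ▸ le_abs_self _
    _ ≤ 4 / 3 * (C * ‖f‖ + 2 * ‖f‖) := by linarith
    _ ≤ 4 * C * ‖f‖ := by nlinarith [norm_nonneg f]

/-- The computation at the end of the proof of Lemma 2.7: if `(x k)` in the unit ball of
`X^*` is almost biorthogonal to the normalized sequence `(y k)` and `(v (n k))`
`C`-dominates `(y k)`, then `(x k)` `4C`-dominates `(v^* (n k))`. -/
theorem almost_biorthogonal_dominates_dual
    {X : Type*} [NormedAddCommGroup X] [NormedSpace ℝ X] [CompleteSpace X]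
    {V : Type*} [NormedAddCommGroup V] [NormedSpace ℝ V] [CompleteSpace V]
    {W : Type*} [NormedAddCommGroup W] [NormedSpace ℝ W] [CompleteSpace W]
    (v : ℕ → V) (w : ℕ → W)
    (hvnorm : IsNormalized v) (hvuncond : IsOneUnconditional v)
    (hvbimono : IsBimonotoneSeq v) (hvbasic : IsBasicSeq v)
    (hw : IsBiorthDual v w)
    (C : ℝ) (hC : 1 ≤ C)
    (x : ℕ → StrongDual ℝ X) (hx : ∀ k, ‖x k‖ ≤ 1)
    (y : ℕ → X) (hy : ∀ k, ‖y k‖ = 1)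
    (n : ℕ → ℕ) (hn : StrictMono n)
    (hbig : ∀ k, x k (y k) > 3/4)
    (hsmall : ∀ k l, k ≠ l → |x k (y l)| < ((4:ℝ) ^ (max k l))⁻¹)
    (hdom : DomBy (fun k => v (n k)) y C) :
    DomBy x (fun k => w (n k)) (4*C) :=
  almost_biorthogonal_dominates_dual_general v w hvnorm hvuncond hvbimono hw C hC x y hy n hn hbig
    hsmall hdom
end
end

section
/- Let Z be a Banach space with an FDD (E_n) satisfying subsequential V upper block estimates, where V = (v_i) is a normalized, 1-unconditional basic sequence which is weakly null. Then (E_n) is a shrinking FDD. -/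
open Filter Topology Set

noncomputable section

/-! If `φ` is not the norm limit of `φ ∘ P_[0,n)`, then, since the partial sum
projections are uniformly bounded, one finds a normalized block sequence `(x i)` on which `φ`
stays above some `δ > 0`. The upper block estimate dominates `(x i)` by `(v (m i))` with
`m i → ∞`, a weakly null sequence, so by Mazur some convex combination of the `v (m i)` has
small norm; the same combination of the `x i` is then small, yet `φ` is at least `δ` on it. -/

section Mazur

variable {V : Type*} [NormedAddCommGroup V] [NormedSpace ℝ V]
variable {X : Type*} [NormedAddCommGroup X] [NormedSpace ℝ X]

theorem WeaklyNullSeq.comp_tendsto {u : ℕ → V} (hu : WeaklyNullSeq u) {m : ℕ → ℕ}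
    (hm : Tendsto m atTop atTop) : WeaklyNullSeq (fun i => u (m i)) :=
  fun f => (hu f).comp hm

theorem WeaklyNullSeq.zero_mem_closure_convexHull {u : ℕ → V} (hu : WeaklyNullSeq u) :
    (0 : V) ∈ closure (convexHull ℝ (range u)) := by
  by_contra h
  obtain ⟨f, r, hf, hr⟩ := geometric_hahn_banach_closed_point
    (convex_convexHull ℝ (range u)).closure isClosed_closure h
  rw [map_zero] at hr
  obtain ⟨i, hi⟩ := ((hu f).eventually (lt_mem_nhds hr)).exists
  exact (hf _ (subset_closure (subset_convexHull ℝ _ (mem_range_self i)))).not_gt hi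

theorem DomBy.norm_sum_le {u : ℕ → V} {x : ℕ → X} {C : ℝ} (h : DomBy u x C)
    (s : Finset ℕ) (a : ℕ → ℝ) :
    ‖∑ i ∈ s, a i • x i‖ ≤ C * ‖∑ i ∈ s, a i • u i‖ := by
  classical
  obtain ⟨n, hn⟩ : ∃ n, s ⊆ Finset.range n :=
    ⟨s.sup id + 1, fun i hi => Finset.mem_range.2 (Nat.lt_succ_of_le (s.le_sup (f := id) hi))⟩
  simpa only [ite_smul, zero_smul, Finset.sum_ite_mem, Finset.inter_eq_right.2 hn] using
    h (fun i => if i ∈ s then a i else 0) n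

theorem DomBy.exists_apply_lt_of_weaklyNullSeq {u : ℕ → V} {x : ℕ → X} {C : ℝ}
    (h : DomBy u x C) (hu : WeaklyNullSeq u) (φ : X →L[ℝ] ℝ) {δ : ℝ} (hδ : 0 < δ) :
    ∃ i, φ (x i) < δ := by
  by_contra! hx
  have hsmall : ∀ᶠ y in 𝓝 (0 : V), ‖φ‖ * (C * ‖y‖) < δ :=
    (Continuous.tendsto' (by fun_prop) 0 0 (by simp)).eventually (gt_mem_nhds hδ)
  obtain ⟨y, hy, hyu⟩ := mem_closure_iff_nhds.1 hu.zero_mem_closure_convexHull _ hsmall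
  rw [convexHull_range_eq_exists_affineCombination] at hyu
  obtain ⟨s, a, ha, hsum, rfl⟩ := hyu
  change _ < δ at hy
  rw [s.affineCombination_eq_linear_combination u a hsum] at hy
  have hlower : δ ≤ φ (∑ i ∈ s, a i • x i) := calc
    δ = ∑ i ∈ s, a i * δ := by rw [← Finset.sum_mul, hsum, one_mul]
    _ ≤ ∑ i ∈ s, a i * φ (x i) :=
      Finset.sum_le_sum fun i hi => mul_le_mul_of_nonneg_left (hx i) (ha i hi)
    _ = φ (∑ i ∈ s, a i • x i) := by simp only [map_sum, map_smul, smul_eq_mul]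
  have hupper : φ (∑ i ∈ s, a i • x i) ≤ ‖φ‖ * (C * ‖∑ i ∈ s, a i • u i‖) :=
    (le_abs_self _).trans ((φ.le_opNorm _).trans
      (mul_le_mul_of_nonneg_left (h.norm_sum_le s a) (norm_nonneg φ)))
  linarith

end Mazur

namespace FDD

variable {Z : Type*} [NormedAddCommGroup Z] [NormedSpace ℝ Z] (F : FDD Z)

@[simp]
theorem proj_apply (s : Finset ℕ) (z : Z) : F.proj s z = ∑ i ∈ s, F.P i z := by
  simp [proj]

theorem tendsto_proj_range (z : Z) :
    Tendsto (fun n => F.proj (Finset.range n) z) atTop (𝓝 z) := by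
  simpa only [proj_apply] using F.sum_eq z

theorem exists_norm_proj_range_le [CompleteSpace Z] :
    ∃ K, 0 < K ∧ ∀ n, ‖F.proj (Finset.range n)‖ ≤ K := by
  obtain ⟨K, hK⟩ := banach_steinhaus fun z => by
    obtain ⟨c, hc⟩ := (F.tendsto_proj_range z).norm.bddAbove_range
    exact ⟨c, fun n => hc (mem_range_self n)⟩
  exact ⟨max K 1, by positivity, fun n => (hK n).trans (le_max_left K 1)⟩

theorem proj_Ico_eq_sub {n N : ℕ} (h : n ≤ N) :
    F.proj (Finset.Ico n N) = F.proj (Finset.range N) - F.proj (Finset.range n) :=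
  Finset.sum_Ico_eq_sub _ h

theorem norm_proj_Ico_le {K : ℝ} (hK : ∀ n, ‖F.proj (Finset.range n)‖ ≤ K) {n N : ℕ}
    (h : n ≤ N) : ‖F.proj (Finset.Ico n N)‖ ≤ 2 * K := by
  rw [F.proj_Ico_eq_sub h, two_mul]
  exact (norm_sub_le _ _).trans (add_le_add (hK N) (hK n))

theorem P_P_of_ne {i j : ℕ} (h : j ≠ i) (z : Z) : F.P j (F.P i z) = 0 := by
  classical
  let f : ℕ → Z := fun k => if k = i then F.P i z else 0
  have hf : Tendsto (fun n => ∑ k ∈ Finset.range n, f k) atTop (𝓝 (F.P i z)) :=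
    tendsto_atTop_of_eventually_const (i₀ := i + 1) fun n hn => by
      simp [f, Finset.sum_ite_eq', Finset.mem_range, Nat.lt_of_succ_le hn]
  have hmem : ∀ k, f k ∈ F.E k := fun k => by
    by_cases hk : k = i
    · simp only [f, hk, if_true]; exact F.mem_E i z
    · simp only [f, hk, if_false]; exact zero_mem _
  simpa [f, h] using (F.unique _ f hmem hf j).symm

theorem supp_proj_subset (s : Finset ℕ) (z : Z) : F.supp (F.proj s z) ⊆ s := by
  intro j hj
  by_contra hjs
  refine hj ?_
  rw [proj_apply, map_sum]
  exact Finset.sum_eq_zero fun i hi => F.P_P_of_ne (ne_of_mem_of_not_mem hi hjs).symm z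

theorem supp_nonempty {z : Z} (hz : z ≠ 0) : (F.supp z).Nonempty := by
  by_contra h
  have hP : ∀ i, F.P i z = 0 := fun i => by_contra fun hi => h ⟨i, hi⟩
  refine hz (tendsto_nhds_unique (F.sum_eq z) ?_)
  simp only [hP, Finset.sum_const_zero, tendsto_const_nhds]

theorem le_minSupp {z : Z} (hz : z ≠ 0) {a : ℕ} (h : F.supp z ⊆ Ici a) : a ≤ F.minSupp z :=
  h (Nat.sInf_mem (F.supp_nonempty hz))

theorem exists_isBlockSeq {p : Z → Prop} (h : ∀ M, ∃ y N, p y ∧ F.supp y ⊆ Ico M N) :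
    ∃ x : ℕ → Z, F.IsBlockSeq x ∧ ∀ i, p (x i) ∧ F.supp (x i) ⊆ Ici i := by
  choose y N hy using h
  let k : ℕ → ℕ := fun i => Nat.rec 0 (fun _ m => max (N m) (m + 1)) i
  have hk : StrictMono k := strictMono_nat_of_lt_succ fun i =>
    lt_max_of_lt_right (Nat.lt_succ_self (k i))
  have hsupp : ∀ i, F.supp (y (k i)) ⊆ Ico (k i) (k (i + 1)) := fun i =>
    (hy (k i)).2.trans (Ico_subset_Ico_right (le_max_left _ _))
  refine ⟨fun i => y (k i), ⟨k, hk, hsupp⟩, fun i => ⟨(hy (k i)).1, ?_⟩⟩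
  exact (hsupp i).trans (Ico_subset_Ici_self.trans (Ici_subset_Ici.2 (hk.id_le i)))

theorem exists_norm_eq_one_lt_apply {K : ℝ} (hK : ∀ n, ‖F.proj (Finset.range n)‖ ≤ K)
    {φ : Z →L[ℝ] ℝ} {n : ℕ} {δ : ℝ} (hδ : 0 ≤ δ)
    (h : δ < ‖φ - φ.comp (F.proj (Finset.range n))‖) :
    ∃ y N, (‖y‖ = 1 ∧ δ / (2 * K) < φ y) ∧ F.supp y ⊆ Ico n N := by
  set ψ := φ - φ.comp (F.proj (Finset.range n))
  obtain ⟨z, hz, hψz⟩ : ∃ z : Z, ‖z‖ ≤ 1 ∧ δ < ψ z := by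
    obtain ⟨z, hz, hψz⟩ := ψ.exists_lt_apply_of_lt_opNorm h
    rcases lt_abs.1 hψz with hψz | hψz
    · exact ⟨z, hz.le, hψz⟩
    · exact ⟨-z, by rw [norm_neg]; exact hz.le, by rwa [map_neg]⟩
  have hlim : Tendsto (fun N => φ (F.proj (Finset.Ico n N) z)) atTop (𝓝 (ψ z)) := by
    have := (φ.continuous.tendsto _).comp
      ((F.tendsto_proj_range z).sub (tendsto_const_nhds (x := F.proj (Finset.range n) z)))
    rw [show ψ z = φ (z - F.proj (Finset.range n) z) by simp [ψ]]
    refine this.congr' ?_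
    filter_upwards [eventually_ge_atTop n] with N hN
    simp only [Function.comp_apply, F.proj_Ico_eq_sub hN, sub_apply]
  obtain ⟨N, hN, hφy⟩ := ((eventually_ge_atTop n).and (hlim.eventually (lt_mem_nhds hψz))).exists
  set y := F.proj (Finset.Ico n N) z
  have hy : ‖y‖ ≤ 2 * K := calc
    ‖y‖ ≤ ‖F.proj (Finset.Ico n N)‖ * ‖z‖ := (F.proj _).le_opNorm z
    _ ≤ ‖F.proj (Finset.Ico n N)‖ := mul_le_of_le_one_right (norm_nonneg _) hz
    _ ≤ 2 * K := F.norm_proj_Ico_le hK hN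
  have hypos : 0 < ‖y‖ := norm_pos_iff.2 fun h0 => by simp [h0] at hφy; linarith
  refine ⟨F.proj (Finset.Ico n N) (‖y‖⁻¹ • z), N, ⟨?_, ?_⟩,
    (F.supp_proj_subset _ _).trans (Finset.coe_Ico n N).subset⟩
  · rw [map_smul, norm_smul, norm_inv, norm_norm, inv_mul_cancel₀ hypos.ne']
  · rw [map_smul, map_smul, smul_eq_mul, inv_mul_eq_div]
    calc δ / (2 * K) ≤ δ / ‖y‖ := div_le_div_of_nonneg_left hδ hypos hy
      _ < φ y / ‖y‖ := div_lt_div_of_pos_right hφy hypos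

end FDD

theorem shrinking_of_upper_block_weakly_null_general
    {Z : Type*} [NormedAddCommGroup Z] [NormedSpace ℝ Z] [CompleteSpace Z]
    {V : Type*} [NormedAddCommGroup V] [NormedSpace ℝ V]
    (F : FDD Z) (v : ℕ → V)
    (hvwnull : WeaklyNullSeq v)
    (hub : F.UpperBlock v) :
    F.Shrinking := by
  obtain ⟨C, -, hC⟩ := hub
  obtain ⟨K, hK0, hK⟩ := F.exists_norm_proj_range_le
  intro φ
  by_contra hφ
  obtain ⟨ε, hε, hfreq⟩ : ∃ ε > 0, ∃ᶠ n in atTop,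
      ¬ dist ‖φ - φ.comp (F.proj (Finset.range n))‖ 0 < ε := by
    simpa only [Metric.tendsto_nhds, not_forall, not_eventually, exists_prop] using hφ
  obtain ⟨x, hx, hxφ⟩ := F.exists_isBlockSeq fun M => by
    obtain ⟨n, hn, hεn⟩ := frequently_atTop.1 hfreq M
    rw [dist_zero_right, norm_norm, not_lt] at hεn
    obtain ⟨y, N, hy, hsupp⟩ :=
      F.exists_norm_eq_one_lt_apply hK (half_pos hε).le (half_lt_self hε |>.trans_le hεn)
    exact ⟨y, N, hy, hsupp.trans (Ico_subset_Ico_left hn)⟩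
  have hm : Tendsto (fun i => F.minSupp (x i)) atTop atTop :=
    tendsto_atTop_mono (fun i => F.le_minSupp (norm_ne_zero_iff.1 ((hxφ i).1.1 ▸ one_ne_zero))
      (hxφ i).2) tendsto_id
  obtain ⟨i, hi⟩ := (hC x hx fun i => (hxφ i).1.1).exists_apply_lt_of_weaklyNullSeq
    (hvwnull.comp_tendsto hm) φ (by positivity : 0 < ε / 2 / (2 * K))
  exact hi.not_gt (hxφ i).1.2

/-- If an FDD satisfies subsequential `V` upper block estimates with `V` weakly null,
then the FDD is shrinking. -/
theorem shrinking_of_upper_block_weakly_null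
    {Z : Type*} [NormedAddCommGroup Z] [NormedSpace ℝ Z] [CompleteSpace Z]
    {V : Type*} [NormedAddCommGroup V] [NormedSpace ℝ V] [CompleteSpace V]
    (F : FDD Z) (v : ℕ → V)
    (hvnorm : IsNormalized v) (hvuncond : IsOneUnconditional v)
    (hvbasic : IsBasicSeq v) (hvwnull : WeaklyNullSeq v)
    (hub : F.UpperBlock v) :
    F.Shrinking :=
  shrinking_of_upper_block_weakly_null_general F v hvwnull hub
end
end

section
/- Let (v_i) be a normalized, 1-unconditional basic sequence which is D-right dominant for some D >= 1. Then its sequence of biorthogonal functionals (v_i*) is D-left dominant: whenever m_1 < m_2 < ... and n_1 < n_2 < ... are positive integers with m_i <= n_i for all i, the sequence (v*_{m_i}) D-dominates (v*_{n_i}). -/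
open Filter Topology Set

noncomputable section

/-! Restricting a 1-unconditional basic sequence and its biorthogonal functionals to a common
subsequence again gives a pair in biorthogonal duality, since coordinate projections are
contractive. In such a pair `∑ aᵢ cᵢ ≤ ‖∑ aᵢ vᵢ*‖ ‖∑ cᵢ vᵢ‖`, and this pairing bound dualizes
domination: if `(v_{nᵢ})` `D`-dominates `(v_{mᵢ})`, then `(v*_{mᵢ})` `D`-dominates `(v*_{nᵢ})`. -/

open Finset

theorem StrictMono.image_range_subset_range {n : ℕ → ℕ} (hn : StrictMono n) (N : ℕ) :
    (range N).image n ⊆ range (n N) := fun j hj => by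
  obtain ⟨i, hi, rfl⟩ := mem_image.mp hj
  exact mem_range.mpr (hn (mem_range.mp hi))

theorem StrictMono.sum_range_extend {M α : Type*} [AddCommMonoid M] [Zero α] {n : ℕ → ℕ}
    (hn : StrictMono n) (f : ℕ → α → M) (hf : ∀ j, f j 0 = 0) (a : ℕ → α) (N : ℕ) :
    ∑ j ∈ range (n N), f j (Function.extend n a 0 j) = ∑ i ∈ range N, f (n i) (a i) := by
  have hzero : ∀ j ∈ range (n N), j ∉ (range N).image n → f j (Function.extend n a 0 j) = 0 := by
    intro j hj hjn
    have hj' : ¬∃ i, n i = j := by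
      rintro ⟨i, rfl⟩
      exact hjn (mem_image_of_mem n (mem_range.mpr (hn.lt_iff_lt.mp (mem_range.mp hj))))
    rw [Function.extend_apply' _ _ _ hj', Pi.zero_apply, hf]
  rw [← sum_subset (hn.image_range_subset_range N) hzero, sum_image hn.injective.injOn]
  simp only [hn.injective.extend_apply]

section

variable {V : Type*} [NormedAddCommGroup V] [NormedSpace ℝ V]
variable {W : Type*} [NormedAddCommGroup W] [NormedSpace ℝ W]

theorem IsOneUnconditional.norm_sum_le_of_subset {v : ℕ → V} (hv : IsOneUnconditional v)
    (b : ℕ → ℝ) {T : Finset ℕ} {M : ℕ} (hT : T ⊆ range M) :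
    ‖∑ j ∈ T, b j • v j‖ ≤ ‖∑ j ∈ range M, b j • v j‖ := by
  classical
  set ε : ℕ → ℝ := fun j => if j ∈ T then 1 else -1
  have hε : ∀ j, ε j = 1 ∨ ε j = -1 := fun j => by by_cases h : j ∈ T <;> simp [ε, h]
  -- flipping the signs off `T` and averaging kills every term outside `T`
  have hmean : ∑ j ∈ T, b j • v j = (1 / 2 : ℝ) •
      (∑ j ∈ range M, b j • v j + ∑ j ∈ range M, (ε j * b j) • v j) := by
    rw [← sum_add_distrib, smul_sum, ← sum_subset hT]
    · refine sum_congr rfl fun j hj => ?_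
      simp only [ε, if_pos hj]
      module
    · intro j _ hj
      simp only [ε, if_neg hj]
      module
  calc ‖∑ j ∈ T, b j • v j‖
      ≤ (1 / 2) * (‖∑ j ∈ range M, b j • v j‖ + ‖∑ j ∈ range M, (ε j * b j) • v j‖) := by
        rw [hmean, norm_smul, Real.norm_of_nonneg (by norm_num)]
        gcongr
        exact norm_add_le _ _
    _ = ‖∑ j ∈ range M, b j • v j‖ := by rw [hv b ε hε M]; ring

theorem IsBiorthDual.sum_mul_le {v : ℕ → V} {w : ℕ → W} (hw : IsBiorthDual v w)
    (a c : ℕ → ℝ) (n : ℕ) :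
    ∑ i ∈ range n, a i * c i ≤ ‖∑ i ∈ range n, a i • w i‖ * ‖∑ i ∈ range n, c i • v i‖ := by
  set L := ‖∑ i ∈ range n, a i • w i‖
  set t := ‖∑ i ∈ range n, c i • v i‖
  -- `c / s` is admissible for every `s > t`; letting `s ↓ t` also covers the case `t = 0`
  have hscaled : ∀ s, t < s → ∑ i ∈ range n, a i * c i ≤ L * s := by
    intro s hs
    have hs0 : 0 < s := (norm_nonneg _).trans_lt hs
    have hadm : ‖∑ i ∈ range n, (c i / s) • v i‖ ≤ 1 := by
      simp only [div_eq_inv_mul, ← smul_smul, ← smul_sum, norm_smul, Real.norm_of_nonneg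
        (inv_nonneg.mpr hs0.le)]
      exact inv_mul_le_one_of_le₀ hs.le hs0.le
    have hle := (hw a n).1 ⟨fun i => c i / s, hadm, rfl⟩
    simp only [mul_div_assoc', ← sum_div, div_le_iff₀ hs0] at hle
    linarith
  exact ge_of_tendsto (((continuous_const_mul L).tendsto t).mono_left nhdsWithin_le_nhds)
    (eventually_nhdsWithin_of_forall (s := Ioi t) hscaled)

theorem IsBiorthDual.comp_strictMono {v : ℕ → V} {w : ℕ → W} (hv : IsOneUnconditional v)
    (hw : IsBiorthDual v w) {n : ℕ → ℕ} (hn : StrictMono n) :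
    IsBiorthDual (fun i => v (n i)) (fun i => w (n i)) := by
  intro a N
  have hlub := hw (Function.extend n a 0) (n N)
  rw [hn.sum_range_extend (fun j x => x • w j) (fun j => zero_smul ℝ _)] at hlub
  convert hlub using 1
  ext r
  constructor
  · rintro ⟨c, hc, rfl⟩
    refine ⟨Function.extend n c 0, ?_, ?_⟩
    · rwa [hn.sum_range_extend (fun j x => x • v j) (fun j => zero_smul ℝ _)]
    · rw [hn.sum_range_extend (fun j x => x * Function.extend n c 0 j) (fun j => zero_mul _)]
      simp only [hn.injective.extend_apply]
  · rintro ⟨b, hb, rfl⟩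
    refine ⟨fun i => b (n i), ?_, ?_⟩
    · have := hv.norm_sum_le_of_subset b (hn.image_range_subset_range N)
      rw [sum_image hn.injective.injOn] at this
      exact this.trans hb
    · exact hn.sum_range_extend (fun j x => x * b j) (fun j => zero_mul _) a N

end

theorem DomBy.biorthDual {V V' W W' : Type*} [NormedAddCommGroup V] [NormedSpace ℝ V]
    [NormedAddCommGroup V'] [NormedSpace ℝ V'] [NormedAddCommGroup W] [NormedSpace ℝ W]
    [NormedAddCommGroup W'] [NormedSpace ℝ W'] {x : ℕ → V} {y : ℕ → V'} {xs : ℕ → W}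
    {ys : ℕ → W'} (hx : IsBiorthDual x xs) (hy : IsBiorthDual y ys) {D : ℝ} (hD : 0 ≤ D)
    (h : DomBy y x D) : DomBy xs ys D := by
  intro a n
  refine (hy a n).2 ?_
  rintro _ ⟨c, hc, rfl⟩
  calc ∑ i ∈ range n, a i * c i
      ≤ ‖∑ i ∈ range n, a i • xs i‖ * ‖∑ i ∈ range n, c i • x i‖ := hx.sum_mul_le a c n
    _ ≤ ‖∑ i ∈ range n, a i • xs i‖ * D := by
        gcongr
        exact (h c n).trans (mul_le_of_le_one_right hD hc)
    _ = D * ‖∑ i ∈ range n, a i • xs i‖ := mul_comm _ _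

theorem biorth_dual_left_dominant_general
    {V : Type*} [NormedAddCommGroup V] [NormedSpace ℝ V]
    {W : Type*} [NormedAddCommGroup W] [NormedSpace ℝ W]
    (v : ℕ → V) (w : ℕ → W)
    (hvuncond : IsOneUnconditional v)
    (hw : IsBiorthDual v w)
    (D : ℝ) (hD : 1 ≤ D) (hright : RightDominantC v D) :
    LeftDominantC w D := fun m n hm hn hmn =>
  (hright m n hm hn hmn).biorthDual (hw.comp_strictMono hvuncond hm)
    (hw.comp_strictMono hvuncond hn) (zero_le_one.trans hD)

/-- If a normalized `1`-unconditional basic sequence is `D`-right-dominant, then its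
sequence of biorthogonal functionals is `D`-left-dominant. -/
theorem biorth_dual_left_dominant
    {V : Type*} [NormedAddCommGroup V] [NormedSpace ℝ V] [CompleteSpace V]
    {W : Type*} [NormedAddCommGroup W] [NormedSpace ℝ W] [CompleteSpace W]
    (v : ℕ → V) (w : ℕ → W)
    (hvnorm : IsNormalized v) (hvuncond : IsOneUnconditional v) (hvbasic : IsBasicSeq v)
    (hw : IsBiorthDual v w)
    (D : ℝ) (hD : 1 ≤ D) (hright : RightDominantC v D) :
    LeftDominantC w D :=
  biorth_dual_left_dominant_general v w hvuncond hw D hD hright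
end
end
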